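/- For every integer s and every t ∈ ZMod n, the regular representation of the dihedral quandle satisfies λ_t f_s = ω^{2 s · t.val} • f_{−s}, where ω = exp(2πi/n). Consequently, for every integer s the two-dimensional span V_s of {f_s, f_{−s}} is invariant under all λ_t. -/
import Mathlib


/-- The regular representation of the dihedral quandle `R_n = Quandle.dihedral n`
(`ZMod n` with `x ◃ y = 2y - x`) on functions `ZMod n → ℂ`:
`(λ_t f)(x) = f (2t - x)`. -/
def lam (n : ℕ) (t : ZMod n) (f : ZMod n → ℂ) : ZMod n → ℂ :=
  fun x => f (2 * t - x)

/-- `ω = exp(2πi/n)`. -/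
noncomputable def dihedralOmega (n : ℕ) : ℂ :=
  Complex.exp (2 * Real.pi * Complex.I / n)

/-- The character `f_s : ZMod n → ℂ`, `f_s(x) = ω^{s·x.val}`. -/
noncomputable def chi (n : ℕ) (s : ℤ) : ZMod n → ℂ :=
  fun x => dihedralOmega n ^ (s * (x.val : ℤ))

/-- `V_s`: the `ℂ`-linear span of `{f_s, f_{-s}}` in `ZMod n → ℂ`. -/
noncomputable def Vsub (n : ℕ) (s : ℤ) : Submodule ℂ (ZMod n → ℂ) :=
  Submodule.span ℂ {chi n s, chi n (-s)}

lemma omega_ne_zero (n : ℕ) : dihedralOmega n ≠ 0 := Complex.exp_ne_zero _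

lemma omega_pow_n (n : ℕ) (hpos : 0 < n) : dihedralOmega n ^ (n : ℤ) = 1 := by
  rw [dihedralOmega, ← Complex.exp_int_mul]
  have hn : (n : ℂ) ≠ 0 := Nat.cast_ne_zero.mpr hpos.ne'
  rw [show ((n : ℤ) : ℂ) * (2 * Real.pi * Complex.I / n) = 2 * Real.pi * Complex.I by
    push_cast; field_simp]
  exact Complex.exp_two_pi_mul_I

lemma omega_zpow_congr (n : ℕ) (hpos : 0 < n) {a b : ℤ} (h : (a : ZMod n) = b) :
    dihedralOmega n ^ a = dihedralOmega n ^ b := by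
  have : (n : ℤ) ∣ a - b := by
    rwa [← ZMod.intCast_zmod_eq_zero_iff_dvd, Int.cast_sub, sub_eq_zero]
  obtain ⟨k, hk⟩ := this
  have ha : a = b + n * k := by omega
  rw [ha, zpow_add₀ (omega_ne_zero n), zpow_mul, omega_pow_n n hpos, one_zpow, mul_one]

lemma lam_chi_eq (n : ℕ) (hpos : 0 < n) (s : ℤ) (t : ZMod n) :
    lam n t (chi n s) = dihedralOmega n ^ (2 * s * (t.val : ℤ)) • chi n (-s) := by
  haveI : NeZero n := ⟨hpos.ne'⟩
  funext x
  simp only [lam, chi, Pi.smul_apply, smul_eq_mul]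
  rw [← zpow_add₀ (omega_ne_zero n)]
  apply omega_zpow_congr n hpos
  push_cast
  rw [ZMod.natCast_val, ZMod.natCast_val, ZMod.natCast_val, ZMod.cast_id, ZMod.cast_id,
    ZMod.cast_id]
  ring

/-- The regular representation of `R_n` sends the character `f_s` to
`ω^{2s·t.val} • f_{-s}`; consequently each `V_s = span{f_s, f_{-s}}` is
invariant under all `λ_t`. -/
theorem lam_chi (n : ℕ) (hpos : 0 < n) :
    (∀ (s : ℤ) (t : ZMod n),
      lam n t (chi n s) = dihedralOmega n ^ (2 * s * (t.val : ℤ)) • chi n (-s)) ∧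
    (∀ (s : ℤ) (t : ZMod n), ∀ f ∈ Vsub n s, lam n t f ∈ Vsub n s) := by
  refine ⟨lam_chi_eq n hpos, ?_⟩
  intro s t f hf
  have h1 : chi n s ∈ Vsub n s := Submodule.subset_span (by left; rfl)
  have h2 : chi n (-s) ∈ Vsub n s := Submodule.subset_span (by right; rfl)
  induction hf using Submodule.span_induction with
  | mem g hg =>
    rcases hg with rfl | rfl
    · rw [lam_chi_eq n hpos]
      exact Submodule.smul_mem _ _ h2
    · rw [lam_chi_eq n hpos, neg_neg]
      exact Submodule.smul_mem _ _ h1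
  | zero =>
    have : lam n t 0 = 0 := rfl
    rw [this]; exact Submodule.zero_mem _
  | add g h _ _ hg hh =>
    have : lam n t (g + h) = lam n t g + lam n t h := rfl
    rw [this]; exact Submodule.add_mem _ hg hh
  | smul c g _ hg =>
    have : lam n t (c • g) = c • lam n t g := rfl
    rw [this]; exact Submodule.smul_mem _ _ hg
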